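/- Let $T \geq 1$, let $K_1, \ldots, K_T$ be $H \times H$ real positive semidefinite matrices such that $\bar{K} := \sum_{t=1}^T K_t$ is positive definite, let $\beta, \gamma > 0$, and let $\bar{K} = U \Lambda U^{\top}$ be an eigenvalue decomposition of $\bar{K}$ with $U$ orthogonal and $\Lambda$ diagonal with positive diagonal entries. Define $L := (\gamma/\beta)^{1/4}\, U \Lambda^{1/4}$ and $M_t := (\beta/\gamma)^{1/2}\, \Lambda^{-1/4} U^{\top} K_t U \Lambda^{-1/4}$ for $t = 1, \ldots, T$. Then each $M_t$ is positive semidefinite, $L M_t L^{\top} = K_t$ for all $t$, and $\gamma \sum_{t=1}^T \mathrm{tr}(M_t) + \beta \|L\|_F^2 = 2\sqrt{\beta\gamma}\,\mathrm{tr}(\bar{K}^{1/2})$. -/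

import Mathlib

open Matrix

/-- The (unique) positive semidefinite square root of a real positive semidefinite
matrix (junk value `0` if the matrix is not positive semidefinite). -/
noncomputable def psdSqrt {n : ℕ} (A : Matrix (Fin n) (Fin n) ℝ) : Matrix (Fin n) (Fin n) ℝ :=
  letI := Classical.propDecidable A.PosSemidef
  if h : A.PosSemidef then
    (h.1.eigenvectorUnitary : Matrix (Fin n) (Fin n) ℝ) * diagonal (Real.sqrt ∘ h.1.eigenvalues) *
      (star h.1.eigenvectorUnitary : Matrix (Fin n) (Fin n) ℝ) else 0

lemma psd_smul' {n : ℕ} {A : Matrix (Fin n) (Fin n) ℝ} (hA : A.PosSemidef) {c : ℝ}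
    (hc : 0 ≤ c) : (c • A).PosSemidef := by
  refine ⟨?_, fun x => ?_⟩
  · unfold Matrix.IsHermitian
    rw [conjTranspose_smul, hA.1]
    simp
  · simp only [smul_mulVec, dotProduct_smul, smul_eq_mul, RCLike.star_def]
    have := hA.2 x
    simpa [Finsupp.sum, Finset.mul_sum, mul_assoc, mul_left_comm] using mul_nonneg hc this

/-- Explicit construction achieving equality in Proposition 1: with eigenvalue
decomposition `∑ t, K t = U Λ Uᵀ` (with `Λ = diagonal d`, `d > 0`), setting
`L = (γ/β)^{1/4} U Λ^{1/4}` and `M t = (β/γ)^{1/2} Λ^{-1/4} Uᵀ (K t) U Λ^{-1/4}`,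
each `M t` is positive semidefinite, `L * M t * Lᵀ = K t`, and
`γ ∑ t tr(M t) + β ‖L‖_F² = 2 √(βγ) tr((∑ t, K t)^{1/2})`. -/
theorem stmt_5 {H T : ℕ} (hT : 1 ≤ T)
    (K : Fin T → Matrix (Fin H) (Fin H) ℝ)
    (hK : ∀ t, (K t).PosSemidef)
    (hKbar : (∑ t, K t).PosDef)
    (β γ : ℝ) (hβ : 0 < β) (hγ : 0 < γ)
    (U : Matrix (Fin H) (Fin H) ℝ) (d : Fin H → ℝ)
    (hU : U * Uᵀ = 1) (hU' : Uᵀ * U = 1) (hd : ∀ i, 0 < d i)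
    (hdecomp : ∑ t, K t = U * Matrix.diagonal d * Uᵀ)
    (L : Matrix (Fin H) (Fin H) ℝ)
    (hL : L = (γ / β) ^ ((1 : ℝ) / 4) •
      (U * Matrix.diagonal fun i => d i ^ ((1 : ℝ) / 4)))
    (M : Fin T → Matrix (Fin H) (Fin H) ℝ)
    (hM : ∀ t, M t = (β / γ) ^ ((1 : ℝ) / 2) •
      ((Matrix.diagonal fun i => d i ^ (-(1 : ℝ) / 4)) * Uᵀ * K t * U *
        Matrix.diagonal fun i => d i ^ (-(1 : ℝ) / 4))) :
    (∀ t, (M t).PosSemidef) ∧ (∀ t, L * M t * Lᵀ = K t) ∧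
      γ * ∑ t, (M t).trace + β * (L * Lᵀ).trace
        = 2 * Real.sqrt (β * γ) * (psdSqrt (∑ t, K t)).trace := by
  have hβγ : (0:ℝ) < β / γ := div_pos hβ hγ
  have hγβ : (0:ℝ) < γ / β := div_pos hγ hβ
  set D4 : Matrix (Fin H) (Fin H) ℝ := Matrix.diagonal fun i => d i ^ ((1:ℝ)/4) with hD4
  set Dm : Matrix (Fin H) (Fin H) ℝ := Matrix.diagonal fun i => d i ^ (-(1:ℝ)/4) with hDm
  set Dh : Matrix (Fin H) (Fin H) ℝ := Matrix.diagonal fun i => d i ^ ((1:ℝ)/2) with hDh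
  -- diagonal products
  have h4m : D4 * Dm = 1 := by
    rw [hD4, hDm, diagonal_mul_diagonal]
    have : (fun i => d i ^ ((1:ℝ)/4) * d i ^ (-(1:ℝ)/4)) = fun _ : Fin H => (1:ℝ) := by
      funext i; rw [← Real.rpow_add (hd i)]; norm_num
    rw [this, diagonal_one]
  have hm4 : Dm * D4 = 1 := by
    rw [hD4, hDm, diagonal_mul_diagonal]
    have : (fun i => d i ^ (-(1:ℝ)/4) * d i ^ ((1:ℝ)/4)) = fun _ : Fin H => (1:ℝ) := by
      funext i; rw [← Real.rpow_add (hd i)]; norm_num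
    rw [this, diagonal_one]
  have h44 : D4 * D4 = Dh := by
    rw [hD4, hDh, diagonal_mul_diagonal]
    have : (fun i => d i ^ ((1:ℝ)/4) * d i ^ ((1:ℝ)/4)) = fun i => d i ^ ((1:ℝ)/2) := by
      funext i; rw [← Real.rpow_add (hd i)]; norm_num
    rw [this]
  have hmdm : Dm * (Matrix.diagonal d * Dm) = Dh := by
    rw [hDm, hDh, diagonal_mul_diagonal, diagonal_mul_diagonal]
    have : (fun i => d i ^ (-(1:ℝ)/4) * (d i * d i ^ (-(1:ℝ)/4)))
        = fun i => d i ^ ((1:ℝ)/2) := by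
      funext i
      nth_rewrite 2 [← Real.rpow_one (d i)]
      rw [← Real.rpow_add (hd i), ← Real.rpow_add (hd i)]
      norm_num
    rw [this]
  have hDhDh : Dh * Dh = Matrix.diagonal d := by
    rw [hDh, diagonal_mul_diagonal]
    have : (fun i => d i ^ ((1:ℝ)/2) * d i ^ ((1:ℝ)/2)) = fun i => d i := by
      funext i; rw [← Real.rpow_add (hd i)]; norm_num [Real.rpow_one]
    rw [this]
  -- M psd
  have hMpsd : ∀ t, (M t).PosSemidef := by
    intro t
    rw [hM t]
    refine psd_smul' ?_ (le_of_lt (Real.rpow_pos_of_pos hβγ _))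
    have : Dm * Uᵀ * K t * U * Dm = (Dm * Uᵀ) * K t * (Dm * Uᵀ)ᴴ := by
      simp [conjTranspose_mul, Matrix.mul_assoc, hDm, diagonal_transpose]
    rw [this]
    exact (hK t).mul_mul_conjTranspose_same _
  have e2 : ∀ X : Matrix (Fin H) (Fin H) ℝ, Dm * (D4 * X) = X := fun X => by
    rw [← Matrix.mul_assoc, hm4, Matrix.one_mul]
  have e3 : ∀ X : Matrix (Fin H) (Fin H) ℝ, U * (Uᵀ * X) = X := fun X => by
    rw [← Matrix.mul_assoc, hU, Matrix.one_mul]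
  have e4 : ∀ X : Matrix (Fin H) (Fin H) ℝ, Uᵀ * (U * X) = X := fun X => by
    rw [← Matrix.mul_assoc, hU', Matrix.one_mul]
  refine ⟨hMpsd, ?_, ?_⟩
  · -- L M Lᵀ = K
    intro t
    have ha : ((γ/β) ^ ((1:ℝ)/4)) * ((γ/β) ^ ((1:ℝ)/4)) = (γ/β) ^ ((1:ℝ)/2) := by
      rw [← Real.rpow_add hγβ]; norm_num
    have hab : ((γ/β) ^ ((1:ℝ)/2)) * ((β/γ) ^ ((1:ℝ)/2)) = 1 := by
      rw [← Real.mul_rpow hγβ.le hβγ.le]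
      rw [show γ/β*(β/γ) = 1 by field_simp, Real.one_rpow]
    have hLT : Lᵀ = (γ / β) ^ ((1 : ℝ) / 4) • (D4 * Uᵀ) := by
      rw [hL]; simp [transpose_smul, transpose_mul, hD4, diagonal_transpose]
    rw [hLT, hM t, hL]
    simp only [Matrix.smul_mul, Matrix.mul_smul, smul_smul]
    rw [show (γ/β) ^ ((1:ℝ)/4) * ((β/γ) ^ ((1:ℝ)/2) * (γ/β) ^ ((1:ℝ)/4)) = 1 by
      rw [← mul_assoc, mul_comm ((γ/β) ^ ((1:ℝ)/4)), mul_assoc, ha, mul_comm, hab]]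
    rw [one_smul]
    have e1 : ∀ X : Matrix (Fin H) (Fin H) ℝ, D4 * (Dm * X) = X := fun X => by
      rw [← Matrix.mul_assoc, h4m, Matrix.one_mul]
    simp only [Matrix.mul_assoc]
    rw [e1, e3, e2, hU, Matrix.mul_one]
  · -- trace identity
    have htrM : ∑ t, (M t).trace = (β/γ) ^ ((1:ℝ)/2) * Dh.trace := by
      have h1 : ∀ t, (M t).trace
          = (β/γ) ^ ((1:ℝ)/2) * (Dm * Uᵀ * K t * U * Dm).trace := by
        intro t; rw [hM t, trace_smul, smul_eq_mul]
      rw [Finset.sum_congr rfl fun t _ => h1 t, ← Finset.mul_sum]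
      congr 1
      have h2 : ∑ t, (Dm * Uᵀ * K t * U * Dm).trace
          = (Dm * Uᵀ * (∑ t, K t) * U * Dm).trace := by
        rw [← trace_sum]
        congr 1
        simp only [Matrix.mul_sum, Matrix.sum_mul]
      rw [h2, hdecomp]
      congr 1
      simp only [Matrix.mul_assoc]
      rw [e4, e4, hmdm]
    have htrL : (L * Lᵀ).trace = (γ/β) ^ ((1:ℝ)/2) * Dh.trace := by
      have hLT : Lᵀ = (γ / β) ^ ((1 : ℝ) / 4) • (D4 * Uᵀ) := by
        rw [hL]; simp [transpose_smul, transpose_mul, hD4, diagonal_transpose]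
      rw [hLT, hL, Matrix.smul_mul, Matrix.mul_smul, smul_smul, trace_smul, smul_eq_mul]
      have ha : ((γ/β) ^ ((1:ℝ)/4)) * ((γ/β) ^ ((1:ℝ)/4)) = (γ/β) ^ ((1:ℝ)/2) := by
        rw [← Real.rpow_add hγβ]; norm_num
      rw [ha]
      congr 1
      rw [show U * D4 * (D4 * Uᵀ) = U * (D4 * (D4 * Uᵀ)) by simp only [Matrix.mul_assoc],
        ← Matrix.mul_assoc D4, h44]
      rw [trace_mul_comm, Matrix.mul_assoc, hU', Matrix.mul_one]
    -- psdSqrt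
    have hS : psdSqrt (∑ t, K t) = U * Dh * Uᵀ := by
      have hpsd : (U * Dh * Uᵀ).PosSemidef := by
        have hD : Dh.PosSemidef := by
          rw [hDh]
          refine posSemidef_diagonal_iff.mpr fun i => ?_
          exact (Real.rpow_pos_of_pos (hd i) _).le
        have := hD.mul_mul_conjTranspose_same U
        simpa using this
      have hsq : (U * Dh * Uᵀ) ^ 2 = ∑ t, K t := by
        rw [pow_two, hdecomp]
        simp only [Matrix.mul_assoc]
        rw [e4, ← Matrix.mul_assoc Dh, hDhDh]
      rw [psdSqrt, dif_pos hKbar.posSemidef]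
      have hc := hKbar.posSemidef.1.cfc_eq Real.sqrt
      have hB : IsSelfAdjoint (U * Dh * Uᵀ) := hpsd.1
      calc _ = cfc Real.sqrt (∑ t, K t) := by
            rw [hc]; simp [Matrix.IsHermitian.cfc, Function.comp_def]
        _ = cfc Real.sqrt ((U * Dh * Uᵀ) ^ 2) := by rw [hsq]
        _ = cfc (fun x => Real.sqrt (x ^ 2)) (U * Dh * Uᵀ) := (cfc_comp_pow _ _ _).symm
        _ = cfc (id : ℝ → ℝ) (U * Dh * Uᵀ) := by
            refine cfc_congr fun x hx => ?_
            rw [hpsd.1.spectrum_real_eq_range_eigenvalues] at hx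
            obtain ⟨i, rfl⟩ := hx
            exact Real.sqrt_sq (hpsd.eigenvalues_nonneg i)
        _ = _ := cfc_id ℝ _
    have htrS : (psdSqrt (∑ t, K t)).trace = Dh.trace := by
      rw [hS, trace_mul_comm, ← Matrix.mul_assoc, hU', Matrix.one_mul]
    rw [htrM, htrL, htrS]
    have hsγ : Real.sqrt γ ≠ 0 := ne_of_gt (Real.sqrt_pos.mpr hγ)
    have hsβ : Real.sqrt β ≠ 0 := ne_of_gt (Real.sqrt_pos.mpr hβ)
    have k1 : γ * (β/γ) ^ ((1:ℝ)/2) = Real.sqrt (β*γ) := by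
      rw [← Real.sqrt_eq_rpow, Real.sqrt_div hβ.le, Real.sqrt_mul hβ.le]
      rw [show γ * (Real.sqrt β / Real.sqrt γ) = Real.sqrt β * (γ / Real.sqrt γ) from by ring,
        Real.div_sqrt]
    have k2 : β * (γ/β) ^ ((1:ℝ)/2) = Real.sqrt (β*γ) := by
      rw [← Real.sqrt_eq_rpow, Real.sqrt_div hγ.le, Real.sqrt_mul hβ.le]
      rw [show β * (Real.sqrt γ / Real.sqrt β) = Real.sqrt γ * (β / Real.sqrt β) from by ring,
        Real.div_sqrt, mul_comm]
    calc γ * ((β/γ) ^ ((1:ℝ)/2) * Dh.trace) + β * ((γ/β) ^ ((1:ℝ)/2) * Dh.trace)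
        = (γ * (β/γ) ^ ((1:ℝ)/2) + β * (γ/β) ^ ((1:ℝ)/2)) * Dh.trace := by ring
      _ = 2 * Real.sqrt (β * γ) * Dh.trace := by rw [k1, k2]; ring
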